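/- arXiv:1705.08552 — 2 statements merged into one kernel-verified Lean document; each statement's English description precedes it below -/
import Mathlib

section
/- For t, K with 0 ≤ K ≤ t and the imaginary unit i, for any fixed v with ι(v) = K, Σ_{w ∈ B(t,K)} i^{ι(v ⊕ w)} = Σ_{n=0}^{min{K,t−K}} (−1)^n binom(K,K−n) binom(t−K,n) = Σ_{n} (−1)^n binom(K,n) binom(t−K,n), a real number. -/
def iota {t : ℕ} (w : Fin t → Bool) : ℕ := ∑ i, (w i).toNat

def Bset (t K : ℕ) : Finset (Fin t → Bool) := Finset.univ.filter (fun w => iota w = K)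

lemma iota_eq_card {t : ℕ} (w : Fin t → Bool) :
    iota w = (Finset.univ.filter (fun i => w i = true)).card := by
  rw [Finset.card_filter, iota]
  apply Finset.sum_congr rfl
  intro i _
  cases w i <;> simp

lemma fiber_card (t K n : ℕ) (hK : K ≤ t) (V : Finset (Fin t)) (hV : V.card = K)
    (hn1 : n ≤ K) :
    ((Finset.powersetCard K (Finset.univ : Finset (Fin t))).filter
      (fun W => (V \ W).card = n)).card = K.choose (K - n) * (t - K).choose n := by
  have hVcc : Vᶜ.card = t - K := by rw [Finset.card_compl, hV]; simp
  have : K.choose (K - n) * (t - K).choose n =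
      ((Finset.powersetCard (K - n) V) ×ˢ (Finset.powersetCard n Vᶜ)).card := by
    rw [Finset.card_product, Finset.card_powersetCard, Finset.card_powersetCard, hV, hVcc]
  rw [this]
  apply Finset.card_bij' (fun W _ => (W ∩ V, W \ V))
    (fun p _ => p.1 ∪ p.2)
  · intro W hW
    simp only [Finset.mem_filter, Finset.mem_powersetCard] at hW
    obtain ⟨⟨_, hWcard⟩, hVW⟩ := hW
    have h1 : (V ∩ W).card + (V \ W).card = V.card := Finset.card_inter_add_card_sdiff V W
    have h2 : (W ∩ V).card + (W \ V).card = W.card := Finset.card_inter_add_card_sdiff W V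
    rw [Finset.inter_comm] at h2
    simp only [Finset.mem_product, Finset.mem_powersetCard]
    refine ⟨⟨Finset.inter_subset_right, ?_⟩, ⟨?_, ?_⟩⟩
    · rw [Finset.inter_comm]; omega
    · intro x hx
      simp only [Finset.mem_sdiff] at hx
      simp [Finset.mem_compl, hx.2]
    · omega
  · intro p hp
    simp only [Finset.mem_product, Finset.mem_powersetCard] at hp
    obtain ⟨⟨hA, hAcard⟩, hB, hBcard⟩ := hp
    have hdisj : Disjoint p.1 p.2 := by
      apply Finset.disjoint_left.2
      intro x hx1 hx2
      exact absurd (hA hx1) (Finset.mem_compl.1 (hB hx2))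
    simp only [Finset.mem_filter, Finset.mem_powersetCard]
    refine ⟨⟨Finset.subset_univ _, ?_⟩, ?_⟩
    · rw [Finset.card_union_of_disjoint hdisj]; omega
    · have : V \ (p.1 ∪ p.2) = V \ p.1 := by
        ext x
        simp only [Finset.mem_sdiff, Finset.mem_union]
        constructor
        · rintro ⟨h1, h2⟩; exact ⟨h1, fun h => h2 (Or.inl h)⟩
        · rintro ⟨h1, h2⟩
          refine ⟨h1, fun h => ?_⟩
          rcases h with h | h
          · exact h2 h
          · exact absurd h1 (Finset.mem_compl.1 (hB h))
      rw [this, Finset.card_sdiff_of_subset hA]; omega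
  · intro W _
    ext x
    simp only [Finset.mem_union, Finset.mem_inter, Finset.mem_sdiff]
    tauto
  · intro p hp
    simp only [Finset.mem_product, Finset.mem_powersetCard] at hp
    obtain ⟨⟨hA, _⟩, hB, _⟩ := hp
    have h1 : (p.1 ∪ p.2) ∩ V = p.1 := by
      ext x
      simp only [Finset.mem_inter, Finset.mem_union]
      constructor
      · rintro ⟨h | h, hx⟩
        · exact h
        · exact absurd hx (Finset.mem_compl.1 (hB h))
      · intro h; exact ⟨Or.inl h, hA h⟩
    have h2 : (p.1 ∪ p.2) \ V = p.2 := by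
      ext x
      simp only [Finset.mem_sdiff, Finset.mem_union]
      constructor
      · rintro ⟨h | h, hx⟩
        · exact absurd (hA h) hx
        · exact h
      · intro h; exact ⟨Or.inr h, Finset.mem_compl.1 (hB h)⟩
    rw [h1, h2]

theorem stmt15 (t K : ℕ) (hK : K ≤ t) (v : Fin t → Bool) (hv : iota v = K) :
    (∑ w ∈ Bset t K, Complex.I ^ iota (fun i => xor (v i) (w i)) =
        ∑ n ∈ Finset.range (min K (t - K) + 1),
          (-1 : ℂ) ^ n * (K.choose (K - n)) * ((t - K).choose n)) ∧
    (∑ n ∈ Finset.range (min K (t - K) + 1),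
        (-1 : ℂ) ^ n * (K.choose (K - n)) * ((t - K).choose n) =
      ∑ n ∈ Finset.range (min K (t - K) + 1),
        (-1 : ℂ) ^ n * (K.choose n) * ((t - K).choose n)) := by
  set V : Finset (Fin t) := Finset.univ.filter (fun i => v i = true) with hVdef
  have hVcard : V.card = K := (iota_eq_card v).symm.trans hv
  have hVcc : Vᶜ.card = t - K := by
    rw [Finset.card_compl, hVcard]; simp
  constructor
  · -- step 1: reindex to powersetCard
    have step1 : ∑ w ∈ Bset t K, Complex.I ^ iota (fun i => xor (v i) (w i)) =
        ∑ W ∈ Finset.powersetCard K (Finset.univ : Finset (Fin t)),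
          Complex.I ^ ((V \ W).card + (W \ V).card) := by
      apply Finset.sum_nbij' (fun w => Finset.univ.filter (fun i => w i = true))
        (fun S => fun i => decide (i ∈ S))
      · intro w hw
        simp only [Bset, Finset.mem_filter, Finset.mem_univ, true_and] at hw
        simp only [Finset.mem_powersetCard]
        exact ⟨Finset.subset_univ _, (iota_eq_card w).symm.trans hw⟩
      · intro S hS
        simp only [Finset.mem_powersetCard] at hS
        simp only [Bset, Finset.mem_filter, Finset.mem_univ, true_and]
        rw [iota_eq_card, ← hS.2]
        congr 1
        ext x
        simp
      · intro w _
        funext i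
        simp
      · intro S _
        ext x
        simp
      · intro w hw
        congr 1
        have hsd : (V \ Finset.univ.filter (fun i => w i = true)).card
            = (Finset.univ.filter (fun i => v i = true ∧ w i = false)).card := by
          congr 1; ext x
          simp only [hVdef, Finset.mem_sdiff, Finset.mem_filter, Finset.mem_univ, true_and]
          cases h : w x <;> simp [h]
        have hsd2 : ((Finset.univ.filter (fun i => w i = true)) \ V).card
            = (Finset.univ.filter (fun i => w i = true ∧ v i = false)).card := by
          congr 1; ext x
          simp only [hVdef, Finset.mem_sdiff, Finset.mem_filter, Finset.mem_univ, true_and]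
          cases h : v x <;> simp [h]
        rw [hsd, hsd2, iota, Finset.card_filter, Finset.card_filter, ← Finset.sum_add_distrib]
        apply Finset.sum_congr rfl
        intro i _
        cases h1 : v i <;> cases h2 : w i <;> simp [h1, h2]
    rw [step1]
    -- step 2: fiberwise decomposition
    have maps : ∀ W ∈ Finset.powersetCard K (Finset.univ : Finset (Fin t)),
        (V \ W).card ∈ Finset.range (min K (t - K) + 1) := by
      intro W hW
      simp only [Finset.mem_powersetCard] at hW
      have h1 : (V ∩ W).card + (V \ W).card = V.card := Finset.card_inter_add_card_sdiff V W
      have h2 : (W ∩ V).card + (W \ V).card = W.card := Finset.card_inter_add_card_sdiff W V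
      have h3 : (W \ V).card ≤ Vᶜ.card := by
        apply Finset.card_le_card
        intro x hx
        simp only [Finset.mem_sdiff] at hx
        simp [Finset.mem_compl, hx.2]
      rw [Finset.inter_comm] at h2
      simp only [Finset.mem_range]
      omega
    rw [← Finset.sum_fiberwise_of_maps_to maps]
    apply Finset.sum_congr rfl
    intro n hn
    simp only [Finset.mem_range] at hn
    have hterm : ∀ W ∈ (Finset.powersetCard K (Finset.univ : Finset (Fin t))).filter
        (fun W => (V \ W).card = n),
        Complex.I ^ ((V \ W).card + (W \ V).card) = (-1 : ℂ) ^ n := by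
      intro W hW
      simp only [Finset.mem_filter, Finset.mem_powersetCard] at hW
      obtain ⟨⟨_, hWcard⟩, hVW⟩ := hW
      have h1 : (V ∩ W).card + (V \ W).card = V.card := Finset.card_inter_add_card_sdiff V W
      have h2 : (W ∩ V).card + (W \ V).card = W.card := Finset.card_inter_add_card_sdiff W V
      rw [Finset.inter_comm] at h2
      have heq : (W \ V).card = n := by omega
      rw [hVW, heq, ← two_mul, pow_mul, Complex.I_sq]
    rw [Finset.sum_congr rfl hterm, Finset.sum_const,
      fiber_card t K n hK V hVcard (by omega)]
    push_cast
    ring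
  · apply Finset.sum_congr rfl
    intro n hn
    simp only [Finset.mem_range] at hn
    rw [Nat.choose_symm (show n ≤ K by omega)]
end

section
/- For a binary string v of length t with exactly K ones, v_1 = a, v_t = a', the number of 'blocks' of consecutive ones (cyclically, comparing v with its shift) determines ι(v ⊕ Sv): if v has m maximal runs of ones in the linear (non-cyclic) order, then ι(v ⊕ Sv) = 2m − 2·(a·a') when both endpoints matter cyclically; in particular the count of strings with given ι(v ⊕ Sv) = 2n, v_1 = a, v_t = a' is C_{K,n+aa'}·C_{t−K,n+(1−a)(1−a')} where C denotes composition counts. -/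
/-- The number of compositions of `K` into `m` positive parts. -/
def Ccomp (K m : ℕ) : ℕ :=
  if K = 0 ∧ m = 0 then 1 else if 0 < m ∧ m ≤ K then (K - 1).choose (m - 1) else 0

/-!
Cyclically, the rises `0 → 1` and the falls `1 → 0` of `v` alternate, so they are equally many,
and together they are the ones of `v ⊕ Sv`. Read linearly, a run of ones starts at every cyclic
rise, and also at the first letter when the run through the boundary `v_t v_1` is cut there, i.e.
when `a = a' = 1`.

For the count, fix the numbers of ones, zeros, runs of ones and runs of zeros besides `a` and `a'`.
Complementing all letters swaps ones and zeros, so let the first letter be `1` and remove it: the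
first run of ones either loses a letter or, when the second letter is `0`, disappears. This is
Pascal's rule `C_{K,m} = C_{K-1,m} + C_{K-1,m-1}`.
-/

open Finset

@[simp] lemma Ccomp_zero_zero : Ccomp 0 0 = 1 := rfl

@[simp] lemma Ccomp_zero_succ (m : ℕ) : Ccomp 0 (m + 1) = 0 := by simp [Ccomp]

@[simp] lemma Ccomp_succ_zero (K : ℕ) : Ccomp (K + 1) 0 = 0 := by simp [Ccomp]

@[simp] lemma Ccomp_succ_succ (K m : ℕ) : Ccomp (K + 1) (m + 1) = K.choose m := by
  rw [Ccomp, if_neg (by omega)]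
  split_ifs
  · simp
  · exact (Nat.choose_eq_zero_of_lt (by omega)).symm

lemma Ccomp_succ_succ_eq_add (K m : ℕ) :
    Ccomp (K + 1) (m + 1) = Ccomp K (m + 1) + Ccomp K m := by
  rw [Ccomp_succ_succ]
  rcases K with _ | K
  · rcases m with _ | m <;> simp
  · rcases m with _ | m
    · simp
    · rw [Ccomp_succ_succ, Ccomp_succ_succ, Nat.choose_succ_succ', Nat.add_comm]

lemma iota_compl_add {t : ℕ} (v : Fin t → Bool) : iota vᶜ + iota v = t := by
  rw [iota, iota, ← sum_add_distrib]
  calc ∑ i, ((vᶜ i).toNat + (v i).toNat) = ∑ _i : Fin t, 1 :=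
        sum_congr rfl fun i _ => by cases h : v i <;> simp [h]
    _ = t := by simp

lemma iota_cons {n : ℕ} (x : Bool) (w : Fin n → Bool) :
    iota (Fin.cons x w : Fin (n + 1) → Bool) = iota w + x.toNat := by
  simp [iota, Fin.sum_univ_succ, Nat.add_comm]

lemma card_filter_fin_cons {n : ℕ} {α : Type*} [Fintype α] (P : (Fin (n + 1) → α) → Prop)
    [DecidablePred P] : #{v | P v} = ∑ x, #{w | P (Fin.cons x w)} := by
  simp only [card_filter]
  rw [← (Fin.consEquiv fun _ => α).sum_comp, Fintype.sum_prod_type]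
  rfl

section Runs

variable {n : ℕ}

def rises (b : Bool) (v : Fin (n + 1) → Bool) : ℕ :=
  #{i : Fin n | v i.castSucc ≠ b ∧ v i.succ = b}

def numRuns (b : Bool) (v : Fin (n + 1) → Bool) : ℕ :=
  (if v 0 = b then 1 else 0) + rises b v

def cyclicRises (b : Bool) (v : Fin (n + 1) → Bool) : ℕ :=
  #{i | v i ≠ b ∧ v (i + 1) = b}

lemma card_runStarts_eq_numRuns (b : Bool) (v : Fin (n + 1) → Bool) :
    #{i : Fin (n + 1) | v i = b ∧
      (i.val = 0 ∨ v ⟨i.val - 1, Nat.lt_of_le_of_lt (Nat.sub_le _ _) i.isLt⟩ = !b)} =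
      numRuns b v := by
  rw [card_filter, Fin.sum_univ_succ, numRuns, rises, card_filter]
  congr 1
  · simp
  · refine sum_congr rfl fun i _ => ?_
    have : (⟨i.succ.val - 1, Nat.lt_of_le_of_lt (Nat.sub_le _ _) i.succ.isLt⟩ : Fin (n + 1)) =
        i.castSucc := Fin.ext (by simp)
    rw [this]
    simp [Bool.eq_not_iff, and_comm]

lemma rises_cons (b x : Bool) (w : Fin (n + 1) → Bool) :
    rises b (Fin.cons x w : Fin (n + 2) → Bool) =
      (if x ≠ b ∧ w 0 = b then 1 else 0) + rises b w := by
  simp only [rises, card_filter, Fin.sum_univ_succ (n := n), ← Fin.succ_castSucc, Fin.cons_succ,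
    Fin.castSucc_zero, Fin.cons_zero]

lemma numRuns_compl (b : Bool) (v : Fin (n + 1) → Bool) :
    numRuns b vᶜ = numRuns (!b) v := by
  simp [numRuns, rises, Bool.not_eq_eq_eq_not]

lemma numRuns_cons (b x : Bool) (w : Fin (n + 1) → Bool) :
    numRuns b (Fin.cons x w : Fin (n + 2) → Bool) =
      numRuns b w + if x = b ∧ w 0 ≠ b then 1 else 0 := by
  simp only [numRuns, rises_cons, Fin.cons_zero]
  cases x <;> cases b <;> cases w 0 <;> simp <;> omega

lemma cyclicRises_true_eq_false (v : Fin (n + 1) → Bool) :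
    cyclicRises true v = cyclicRises false v := by
  have hshift : ∑ i, (v (i + 1)).toNat = ∑ i, (v i).toNat :=
    Equiv.sum_comp (Equiv.addRight 1) fun i => (v i).toNat
  have hcount : ∑ i, ((v i).toNat + if v i ≠ true ∧ v (i + 1) = true then 1 else 0) =
      ∑ i, ((v (i + 1)).toNat + if v i ≠ false ∧ v (i + 1) = false then 1 else 0) :=
    sum_congr rfl fun i _ => by cases v i <;> cases v (i + 1) <;> rfl
  rw [sum_add_distrib, sum_add_distrib, hshift, ← card_filter, ← card_filter] at hcount
  exact Nat.add_left_cancel hcount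

lemma iota_xor_shift (v : Fin (n + 1) → Bool) :
    iota (fun i => xor (v i) (v (i + 1))) = 2 * cyclicRises true v := by
  rw [two_mul]
  nth_rw 2 [cyclicRises_true_eq_false]
  simp only [iota, cyclicRises, card_filter, ← sum_add_distrib]
  refine sum_congr rfl fun i _ => ?_
  cases v i <;> cases v (i + 1) <;> rfl

lemma numRuns_eq_cyclicRises_add (b : Bool) (v : Fin (n + 1) → Bool) :
    numRuns b v = cyclicRises b v + if v 0 = b ∧ v (Fin.last n) = b then 1 else 0 := by
  rw [numRuns, rises, cyclicRises, card_filter, card_filter, Fin.sum_univ_castSucc]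
  simp only [Fin.coeSucc_eq_succ, Fin.last_add_one]
  cases v 0 <;> cases v (Fin.last n) <;> cases b <;> simp <;> omega

end Runs

def runStrings (n K M M₀ : ℕ) (a a' : Bool) : Finset (Fin (n + 1) → Bool) :=
  {v | iota v = K ∧ v 0 = a ∧ v (Fin.last n) = a' ∧ numRuns true v = M ∧ numRuns false v = M₀}

lemma compl_mem_runStrings_iff {n K L M M₀ : ℕ} {a a' : Bool} (hKL : K + L = n + 1)
    (v : Fin (n + 1) → Bool) :
    vᶜ ∈ runStrings n L M₀ M (!a) (!a') ↔ v ∈ runStrings n K M M₀ a a' := by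
  have hcompl := iota_compl_add v
  simp only [runStrings, mem_filter, mem_univ, true_and, numRuns_compl, Pi.compl_apply,
    Bool.compl_eq_bnot, Bool.not_inj_iff]
  constructor
  · rintro ⟨hK, h0, hl, hM₀, hM⟩
    exact ⟨by omega, h0, hl, hM, hM₀⟩
  · rintro ⟨hK, h0, hl, hM, hM₀⟩
    exact ⟨by omega, h0, hl, hM₀, hM⟩

lemma card_runStrings_compl {n K L M M₀ : ℕ} {a a' : Bool} (hKL : K + L = n + 1) :
    #(runStrings n K M M₀ a a') = #(runStrings n L M₀ M (!a) (!a')) := by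
  refine card_nbij' compl compl (fun v hv => (compl_mem_runStrings_iff hKL v).2 hv)
    (fun v hv => ?_) (fun v _ => compl_compl v) (fun v _ => compl_compl v)
  rw [mem_coe, ← compl_mem_runStrings_iff hKL, compl_compl]
  exact hv

lemma card_runStrings_zero {K L M M₀ : ℕ} {a a' : Bool} (hKL : K + L = 1)
    (hM : M + 1 = M₀ + a.toNat + a'.toNat) :
    #(runStrings 0 K M M₀ a a') = Ccomp K M * Ccomp L M₀ := by
  obtain ⟨rfl, rfl⟩ | ⟨rfl, rfl⟩ : K = 0 ∧ L = 1 ∨ K = 1 ∧ L = 0 := by omega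
  all_goals cases a <;> cases a' <;> rcases M with _ | _ | M <;> rcases M₀ with _ | _ | M₀ <;>
    simp [runStrings, card_filter_fin_cons, iota, numRuns, rises, filter_insert,
      apply_ite card] at hM ⊢

theorem card_runStrings (n : ℕ) {K L M M₀ : ℕ} {a a' : Bool} (hKL : K + L = n + 1)
    (hM : M + 1 = M₀ + a.toNat + a'.toNat) :
    #(runStrings n K M M₀ a a') = Ccomp K M * Ccomp L M₀ := by
  induction n generalizing K L M M₀ a a' with
  | zero => exact card_runStrings_zero hKL hM
  | succ n ih =>
    have card_head_true {K L M M₀ : ℕ} {a' : Bool} (hKL : K + L = n + 2) (hM : M = M₀ + a'.toNat) :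
        #(runStrings (n + 1) K M M₀ true a') = Ccomp K M * Ccomp L M₀ := by
      rw [runStrings, card_filter_fin_cons]
      simp only [Fintype.sum_bool, iota_cons, Fin.cons_zero, Fin.cons_last, numRuns_cons,
        Bool.toNat_true, ne_eq, Bool.not_eq_true, true_and, Bool.true_eq_false, Bool.not_eq_false,
        false_and, ↓reduceIte, add_zero, Bool.false_eq_true, and_false, filter_false, card_empty]
      rcases K with _ | k
      · rw [card_eq_zero.2 (filter_eq_empty_iff.2 fun x _ h => by omega)]
        rcases M with _ | m
        · obtain rfl : M₀ = 0 := by omega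
          obtain rfl : L = n + 2 := by omega
          simp
        · simp
      rcases M with _ | m
      · rw [Ccomp_succ_zero, zero_mul, card_eq_zero, filter_eq_empty_iff]
        intro x _ h
        rcases Bool.eq_false_or_eq_true (x 0) with h0 | h0 <;> simp [numRuns, h0] at h
      rw [Ccomp_succ_succ_eq_add, add_mul,
        ← ih (a := true) (a' := a') (by omega) (by rw [Bool.toNat_true]; omega),
        ← ih (a := false) (a' := a') (K := k) (by omega) (by rw [Bool.toNat_false]; omega),
        runStrings, runStrings,
        ← card_union_of_disjoint (disjoint_filter.2 fun x _ h₁ h₂ => by simp_all), ← filter_or]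
      refine congrArg card (filter_congr fun x _ => ?_)
      rcases Bool.eq_false_or_eq_true (x 0) with h0 | h0 <;> simp [h0]
    cases a
    · rw [card_runStrings_compl hKL, Bool.not_false, mul_comm]
      refine card_head_true (L := K) (by omega) ?_
      cases a' <;>
        simp only [Bool.toNat_false, Bool.toNat_true, Bool.not_false, Bool.not_true] at hM ⊢ <;>
        omega
    · exact card_head_true hKL (by rw [Bool.toNat_true] at hM; omega)

theorem stmt19 (t K n : ℕ) (ht : 2 ≤ t) (hK : K ≤ t) (a a' : Bool) :
    (∀ v : Fin t → Bool, iota v = K → v ⟨0, by omega⟩ = a → v ⟨t - 1, by omega⟩ = a' →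
      iota (fun i => xor (v i) (v ⟨(i.val + 1) % t, Nat.mod_lt _ (by omega)⟩)) =
        2 * (Finset.univ.filter (fun i : Fin t => v i = true ∧
              (i.val = 0 ∨ v ⟨i.val - 1, Nat.lt_of_le_of_lt (Nat.sub_le _ _) i.isLt⟩ = false))).card
          - 2 * (a && a').toNat) ∧
    (Finset.univ.filter (fun v : Fin t → Bool =>
        iota v = K ∧ v ⟨0, by omega⟩ = a ∧ v ⟨t - 1, by omega⟩ = a' ∧
        iota (fun i => xor (v i) (v ⟨(i.val + 1) % t, Nat.mod_lt _ (by omega)⟩)) = 2 * n)).card =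
      Ccomp K (n + (a && a').toNat) * Ccomp (t - K) (n + (!a && !a').toNat) := by
  obtain ⟨m, rfl⟩ : ∃ m, t = m + 1 := ⟨t - 1, by omega⟩
  have hxor (v : Fin (m + 1) → Bool) :
      iota (fun i => xor (v i) (v ⟨(i.val + 1) % (m + 1), Nat.mod_lt _ (by omega)⟩)) =
        2 * cyclicRises true v := by
    rw [← iota_xor_shift]
    congr! with i
    simp [Fin.val_add]
  have hlast : ∀ h, (⟨m + 1 - 1, h⟩ : Fin (m + 1)) = Fin.last m := fun _ => Fin.ext (by simp)
  simp only [hxor, hlast, Fin.zero_eta]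
  constructor
  · rintro v - rfl rfl
    have hruns := card_runStarts_eq_numRuns true v
    rw [Bool.not_true] at hruns
    rw [hruns, numRuns_eq_cyclicRises_add]
    cases v 0 <;> cases v (Fin.last m) <;> simp
    omega
  · rw [← card_runStrings m (a := a) (a' := a') (by omega : K + (m + 1 - K) = m + 1)
      (by cases a <;> cases a' <;> simp), runStrings]
    refine congrArg card (filter_congr fun v _ => ?_)
    refine and_congr_right fun _ => and_congr_right fun h0 => and_congr_right fun hl => ?_
    rw [numRuns_eq_cyclicRises_add, numRuns_eq_cyclicRises_add, ← cyclicRises_true_eq_false, h0, hl]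
    cases a <;> cases a' <;> simp
end
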